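/- arXiv:math/0104001 — 3 statements merged into one kernel-verified Lean document; each statement's English description precedes it below -/
import Mathlib

section
/- Let R = ℚ[t,v,s] and let g = s + v + s^3·v ∈ R. Then the ideal quotient (⟨t·v, v^2·g⟩ : ⟨v^2⟩) equals ⟨t, g⟩, and moreover (⟨t·v, v^2·g⟩ : ⟨v^k⟩) = ⟨t, g⟩ for all k ≥ 2. -/
open MvPolynomial

namespace Stmt2Aux

abbrev R3 := MvPolynomial (Fin 3) ℚ

noncomputable def ev (i : Fin 3) : R3 →ₐ[ℚ] R3 :=
  aeval (Function.update X i (0 : R3))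

lemma ev_X_self (i : Fin 3) : ev i (X i) = 0 := by
  simp [ev]

lemma ev_X_ne (i j : Fin 3) (h : j ≠ i) : ev i (X j) = X j := by
  simp [ev, Function.update_of_ne h]

lemma X_dvd_sub_ev (i : Fin 3) (p : R3) : X i ∣ p - ev i p := by
  induction p using MvPolynomial.induction_on with
  | C a => simp [ev]
  | add p q hp hq =>
      have := dvd_add hp hq
      convert this using 1
      simp only [map_add]; ring
  | mul_X p j hp =>
      by_cases h : j = i
      · subst h
        rw [map_mul, ev_X_self, mul_zero, sub_zero]
        exact Dvd.intro_left p rfl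
      · rw [map_mul, ev_X_ne i j h]
        have : p * X j - ev i p * X j = (p - ev i p) * X j := by ring
        rw [this]
        exact hp.mul_right _

-- notation
noncomputable def t : R3 := X 0
noncomputable def v : R3 := X 1
noncomputable def s : R3 := X 2
noncomputable def g : R3 := s + v + s ^ 3 * v

lemma key : ∀ m : ℕ, ∀ p a b : R3, p * v ^ m = a * t + b * g →
    ∃ x y : R3, x * t + y * g = p := by
  intro m
  induction m with
  | zero =>
      intro p a b h
      exact ⟨a, b, by simpa using h.symm⟩
  | succ m ih =>
      intro p a b h
      -- apply ev 1 (set v = 0)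
      have h1 : (0 : R3) = ev 1 a * t + ev 1 b * s := by
        have := congrArg (ev 1) h
        simp only [map_mul, map_add, map_pow] at this
        rw [show ev 1 v = 0 from ev_X_self 1] at this
        rw [zero_pow (Nat.succ_ne_zero m), mul_zero] at this
        rw [show ev 1 t = t from ev_X_ne 1 0 (by decide)] at this
        rw [show ev 1 g = s by
          simp only [g, v, s, map_add, map_mul, map_pow]
          rw [ev_X_self 1, ev_X_ne 1 2 (by decide)]; ring] at this
        exact this
      -- apply ev 0 (set t = 0) to h1
      have h2 : ev 0 (ev 1 b) * s = 0 := by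
        have := congrArg (ev 0) h1
        simp only [map_add, map_mul, map_zero] at this
        rw [show ev 0 t = 0 from ev_X_self 0,
          show ev 0 s = s from ev_X_ne 0 2 (by decide)] at this
        rw [mul_zero, zero_add] at this
        exact this.symm
      have hs0 : ev 0 (ev 1 b) = 0 := by
        rcases mul_eq_zero.mp h2 with h' | h'
        · exact h'
        · exact absurd h' (X_ne_zero 2)
      -- so t ∣ ev 1 b
      obtain ⟨c, hc⟩ : t ∣ ev 1 b := by
        have := X_dvd_sub_ev 0 (ev 1 b)
        rwa [hs0, sub_zero] at this
      -- ev 1 a = -(c * s)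
      have ha : ev 1 a = -(c * s) := by
        have ht : t ≠ 0 := X_ne_zero 0
        apply mul_left_cancel₀ ht
        have : t * ev 1 a = -(ev 1 b * s) := by linear_combination -h1
        rw [this, hc]; ring
      obtain ⟨a₁, ha₁⟩ := X_dvd_sub_ev 1 a
      obtain ⟨b₁, hb₁⟩ := X_dvd_sub_ev 1 b
      -- rewrite a and b
      have haa : a = -(c * s) + v * a₁ := by
        have : a = ev 1 a + X 1 * a₁ := by linear_combination ha₁
        rw [ha] at this; exact this
      have hbb : b = t * c + v * b₁ := by
        have : b = ev 1 b + X 1 * b₁ := by linear_combination hb₁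
        rw [hc] at this; exact this
      -- factor out v
      have hfac : p * v ^ (m + 1) =
          v * ((c * (1 + s ^ 3) + a₁) * t + b₁ * g) := by
        rw [h, haa, hbb]
        simp only [g, t, v, s]
        ring
      have hv : v ≠ 0 := X_ne_zero 1
      have hcancel : p * v ^ m = (c * (1 + s ^ 3) + a₁) * t + b₁ * g := by
        apply mul_left_cancel₀ hv
        rw [← hfac]; ring
      exact ih p _ _ hcancel

lemma colon_eq (k : ℕ) (hk : 2 ≤ k) :
    (Ideal.span {t * v, v ^ 2 * g}).colon (Ideal.span {v ^ k}) = Ideal.span {t, g} := by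
  apply le_antisymm
  · intro p hp
    rw [Ideal.mem_colon_span_singleton] at hp
    rw [Ideal.mem_span_pair] at hp
    obtain ⟨x, y, hxy⟩ := hp
    rw [Ideal.mem_span_pair]
    obtain ⟨m, rfl⟩ : ∃ m, k = m + 2 := ⟨k - 2, by omega⟩
    -- p * v ^ (m+2) = x * (t*v) + y * (v^2*g)
    have h1 : p * v ^ (m + 1) = (x * t + (y * v) * g) := by
      have hv : v ≠ 0 := X_ne_zero 1
      apply mul_left_cancel₀ hv
      calc v * (p * v ^ (m + 1)) = p * v ^ (m + 2) := by ring
        _ = x * (t * v) + y * (v ^ 2 * g) := hxy.symm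
        _ = v * (x * t + y * v * g) := by ring
    obtain ⟨x', y', h⟩ := key (m + 1) p x (y * v) h1
    exact ⟨x', y', h⟩
  · rw [Ideal.span_le]
    rintro q hq
    simp only [Set.mem_insert_iff, Set.mem_singleton_iff] at hq
    obtain ⟨m, rfl⟩ : ∃ m, k = m + 2 := ⟨k - 2, by omega⟩
    rcases hq with rfl | rfl
    · rw [SetLike.mem_coe, Ideal.mem_colon_span_singleton, Ideal.mem_span_pair]
      exact ⟨v ^ (m + 1), 0, by ring⟩
    · rw [SetLike.mem_coe, Ideal.mem_colon_span_singleton, Ideal.mem_span_pair]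
      exact ⟨0, v ^ m, by ring⟩

end Stmt2Aux

/-- In `R = ℚ[t,v,s]` with `g = s + v + s³v`, the ideal quotient
`(⟨tv, v²g⟩ : ⟨v²⟩)` equals `⟨t, g⟩`, and more generally
`(⟨tv, v²g⟩ : ⟨vᵏ⟩) = ⟨t, g⟩` for every `k ≥ 2`. -/
theorem stmt_2 :
    letI R := MvPolynomial (Fin 3) ℚ
    letI t : R := X 0
    letI v : R := X 1
    letI s : R := X 2
    letI g : R := s + v + s ^ 3 * v
    (Ideal.span {t * v, v ^ 2 * g}).colon (Ideal.span {v ^ 2}) = Ideal.span {t, g} ∧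
      ∀ k : ℕ, 2 ≤ k →
        (Ideal.span {t * v, v ^ 2 * g}).colon (Ideal.span {v ^ k}) = Ideal.span {t, g} := by
  refine ⟨Stmt2Aux.colon_eq 2 le_rfl, fun k hk => Stmt2Aux.colon_eq k hk⟩
end

section
/- Let R = ℚ[t,v,s] and g = s + v + s^3·v ∈ R. Then ⟨t, v·g⟩ is strictly contained in ⟨t, g⟩; in particular the weak transform (⟨tv, v²g⟩ : v) differs from the strict transform (⟨tv, v²g⟩ : v^∞). -/
open MvPolynomial

namespace Ideal

variable {R : Type*} [CommRing R]

theorem span_pair_mul_left_le (t v g : R) : span {t, v * g} ≤ span {t, g} :=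
  span_le.mpr <| Set.insert_subset_iff.mpr
    ⟨subset_span (by simp), Set.singleton_subset_iff.mpr (mul_mem_left _ v (subset_span (by simp)))⟩

theorem notMem_span_pair_mul_of_ringHom {S : Type*} [Semiring S] (f : R →+* S) {t v g : R}
    (ht : f t = 0) (hv : f v = 0) (hg : f g ≠ 0) : g ∉ span {t, v * g} := fun hmem =>
  hg <| (span_le.mpr (Set.insert_subset_iff.mpr ⟨ht, by simp [hv]⟩) hmem : g ∈ RingHom.ker f)

theorem colon_span_singleton_eq_of_isLeftRegular (t g : R) {v : R} (hv : IsLeftRegular v) :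
    (span {t * v, v ^ 2 * g}).colon (span {v}) = span {t, v * g} := by
  ext x
  rw [mem_colon_span_singleton, mem_span_pair, mem_span_pair]
  constructor
  · rintro ⟨a, b, hab⟩
    exact ⟨a, b, hv (by linear_combination hab)⟩
  · rintro ⟨a, b, rfl⟩
    exact ⟨a, b, by ring⟩

end Ideal

/-- In `R = ℚ[t,v,s]` with `g = s + v + s³v`, the weak transform `⟨t, vg⟩`
is strictly contained in the strict transform `⟨t, g⟩`; in particular
`(⟨tv, v²g⟩ : v)` differs from the saturation `(⟨tv, v²g⟩ : v^∞) = ⋃ₖ (⟨tv, v²g⟩ : vᵏ)`. -/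
theorem stmt_3 :
    letI R := MvPolynomial (Fin 3) ℚ
    letI t : R := X 0
    letI v : R := X 1
    letI s : R := X 2
    letI g : R := s + v + s ^ 3 * v
    Ideal.span {t, v * g} < Ideal.span {t, g} ∧
      (Ideal.span {t * v, v ^ 2 * g}).colon (Ideal.span {v}) ≠
        ⨆ k : ℕ, (Ideal.span {t * v, v ^ 2 * g}).colon (Ideal.span {v ^ k}) := by
  set g : MvPolynomial (Fin 3) ℚ := X 2 + X 1 + X 2 ^ 3 * X 1
  set v : MvPolynomial (Fin 3) ℚ := X 1
  -- at `(t, v, s) = (0, 0, 1)` both generators of `⟨t, vg⟩` vanish while `g = 1`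
  have hg : g ∉ Ideal.span {X 0, v * g} :=
    Ideal.notMem_span_pair_mul_of_ringHom (eval ![0, 0, 1]) (by simp) (by simp [v]) (by simp [g])
  have hg_sat : g ∈ ⨆ k : ℕ, (Ideal.span {X 0 * v, v ^ 2 * g}).colon (Ideal.span {v ^ k}) := by
    refine Ideal.mem_iSup_of_mem 2 (Ideal.mem_colon_span_singleton.mpr ?_)
    rw [mul_comm g]
    exact Ideal.subset_span (by simp)
  refine ⟨lt_of_le_of_ne (Ideal.span_pair_mul_left_le _ _ _)
    fun h => hg (h ▸ Ideal.subset_span (by simp)), fun h => hg ?_⟩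
  rwa [← Ideal.colon_span_singleton_eq_of_isLeftRegular _ _
    (IsRegular.of_ne_zero (X_ne_zero 1 : v ≠ 0)).left, h]
end

section
/- The Krull dimension of the quotient ring ℚ[X,Y,Z]/⟨X, YZ + Y³ + Z³⟩ equals 1; equivalently, the prime ideal ⟨X, YZ+Y³+Z³⟩ has height 2 in ℚ[X,Y,Z]. -/
/-!
The ideal is `(X₀) + (f)` with `f = YZ + Y³ + Z³`, i.e. the preimage of `(f) ⊆ ℚ[Y,Z]` under
`X₀ ↦ 0`, so it is prime as soon as `f` is irreducible. As a monic cubic in `Y` over `ℚ[Z]`, `f`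
could only factor through a root `r(Z)`; specialising `Z = 1` would give a rational root of
`t³ + t + 1`, which is impossible by parity. The chain `0 ⊊ (X₀) ⊊ I` gives `ht I ≥ 2`, and `I` lies
strictly inside the maximal ideal of the origin (the curve has a second rational point), so
`dim ℚ[X,Y,Z]/I ≥ 1`. Since `ht I + dim ℚ[X,Y,Z]/I ≤ 3`, both bounds are equalities.
-/

theorem Rat.pow_three_add_self_add_one_ne_zero (x : ℚ) : x ^ 3 + x + 1 ≠ 0 := by
  intro hx
  have hint : x.num ^ 3 + x.num * (x.den : ℤ) ^ 2 + (x.den : ℤ) ^ 3 = 0 := by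
    have hden : (x.den : ℚ) ≠ 0 := by exact_mod_cast x.den_nz
    rw [← x.num_div_den] at hx
    field_simp at hx
    exact_mod_cast (by linear_combination hx :
      (x.num : ℚ) ^ 3 + x.num * (x.den : ℚ) ^ 2 + (x.den : ℚ) ^ 3 = 0)
  have hodd : ∀ a b : ZMod 2, ¬(a = 0 ∧ b = 0) → a ^ 3 + a * b ^ 2 + b ^ 3 ≠ 0 := by decide
  refine hodd x.num x.den ?_ (by exact_mod_cast congrArg (Int.cast : ℤ → ZMod 2) hint)
  rintro ⟨hnum, hden⟩
  rw [ZMod.intCast_zmod_eq_zero_iff_dvd] at hnum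
  rw [ZMod.natCast_eq_zero_iff] at hden
  have h2 := Nat.dvd_gcd (Int.natAbs_dvd_natAbs.mpr hnum) hden
  rw [x.reduced.gcd_eq_one] at h2
  norm_num at h2

theorem Polynomial.irreducible_X_pow_three_add_C_mul_X_add_C {R : Type*} [CommRing R]
    [IsDomain R] {a b : R} (h : ∀ r : R, r ^ 3 + a * r + b ≠ 0) :
    Irreducible (X ^ 3 + C a * X + C b) := by
  have hdeg : (X ^ 3 + C a * X + C b).natDegree = 3 := by compute_degree!
  rw [Monic.irreducible_iff_roots_eq_zero_of_degree_le_three (by monicity!) (by omega) hdeg.le]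
  refine Multiset.eq_zero_of_forall_notMem fun r hr => h r ?_
  simpa using (mem_roots'.mp hr).2

open MvPolynomial

namespace MvPolynomial

theorem killCompl_X_of_notMem_range {σ τ R : Type*} [CommRing R] {f : σ → τ}
    (hf : Function.Injective f) {j : τ} (hj : j ∉ Set.range f) :
    killCompl (R := R) hf (X j) = 0 := by
  classical
  rw [killCompl, aeval_X, dif_neg hj]

theorem ker_killCompl {σ τ R : Type*} [CommRing R] {f : σ → τ} (hf : Function.Injective f) :
    RingHom.ker (killCompl (R := R) hf) = Ideal.span (X '' (Set.range f)ᶜ) := by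
  set J := Ideal.span (X '' (Set.range f)ᶜ : Set (MvPolynomial τ R))
  refine le_antisymm (fun p hp => ?_) (Ideal.span_le.mpr ?_)
  · have hmk : (Ideal.Quotient.mkₐ R J).comp ((rename f).comp (killCompl hf)) =
        Ideal.Quotient.mkₐ R J := by
      refine algHom_ext fun j => ?_
      simp only [AlgHom.comp_apply]
      by_cases hj : j ∈ Set.range f
      · obtain ⟨i, rfl⟩ := hj
        rw [← rename_X f i, killCompl_rename_app]
      · rw [killCompl_X_of_notMem_range hf hj, map_zero, map_zero, eq_comm,
          Ideal.Quotient.mkₐ_eq_mk, Ideal.Quotient.eq_zero_iff_mem]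
        exact Ideal.subset_span (Set.mem_image_of_mem X hj)
    rw [← Ideal.Quotient.eq_zero_iff_mem, ← Ideal.Quotient.mkₐ_eq_mk R, ← hmk]
    simp [(RingHom.mem_ker).mp hp]
  · rintro _ ⟨j, hj, rfl⟩
    exact killCompl_X_of_notMem_range hf hj

theorem isPrime_span_X_zero_rename_succ {R : Type*} [CommRing R] {n : ℕ}
    {p : MvPolynomial (Fin n) R} (hp : (Ideal.span {p}).IsPrime) :
    (Ideal.span {X 0, rename Fin.succ p}).IsPrime := by
  set κ := killCompl (R := R) (Fin.succ_injective n)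
  have hker : RingHom.ker κ = Ideal.span {X 0} := by
    rw [ker_killCompl, Fin.range_succ, compl_compl, Set.image_singleton]
  have hmap : Ideal.map κ (Ideal.span {rename Fin.succ p}) = Ideal.span {p} := by
    rw [Ideal.map_span, Set.image_singleton, killCompl_rename_app]
  have hsurj : Function.Surjective κ := fun q => ⟨rename Fin.succ q, killCompl_rename_app _ q⟩
  have hcomap : Ideal.span {X 0, rename Fin.succ p} = Ideal.comap κ (Ideal.span {p}) := by
    rw [← hmap, Ideal.comap_map_of_surjective _ hsurj, ← RingHom.ker_eq_comap_bot, hker,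
      Ideal.span_insert, sup_comm]
  rw [hcomap]
  exact Ideal.comap_isPrime _ _

end MvPolynomial

theorem ringKrullDim_quotient_eq_coheight {R : Type*} [CommRing R] (p : PrimeSpectrum R) :
    ringKrullDim (R ⧸ p.asIdeal) = Order.coheight p := by
  have hIci : PrimeSpectrum.zeroLocus (p.asIdeal : Set R) = Set.Ici p := by
    ext q
    simp [← PrimeSpectrum.asIdeal_le_asIdeal]
  rw [ringKrullDim_quotient, Order.coheight_eq_krullDim_Ici, hIci]

theorem Ideal.height_add_ringKrullDim_quotient_le {R : Type*} [CommRing R] (p : Ideal R)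
    [p.IsPrime] : p.height + ringKrullDim (R ⧸ p) ≤ ringKrullDim R := by
  let x : PrimeSpectrum R := ⟨p, ‹_›⟩
  have : Nonempty (PrimeSpectrum R) := ⟨x⟩
  rw [show p = x.asIdeal from rfl, ringKrullDim_quotient_eq_coheight, x.height_eq_orderHeight,
    ringKrullDim, Order.krullDim_eq_iSup_height_add_coheight_of_nonempty, ← WithBot.coe_add,
    WithBot.coe_le_coe]
  exact le_iSup (fun y => Order.height y + Order.coheight y) x

theorem Ideal.height_eq_and_ringKrullDim_quotient_eq {R : Type*} [CommRing R] {p : Ideal R}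
    [p.IsPrime] {m n : ℕ} (hR : ringKrullDim R = m + n) (hp : m ≤ p.height)
    (hq : n ≤ ringKrullDim (R ⧸ p)) : p.height = m ∧ ringKrullDim (R ⧸ p) = n := by
  have hsum := p.height_add_ringKrullDim_quotient_le
  obtain ⟨d, hd⟩ := WithBot.ne_bot_iff_exists.mp (ne_bot_of_le_ne_bot WithBot.coe_ne_bot hq)
  rw [hR, ← hd] at hsum
  rw [← hd] at hq ⊢
  norm_cast at hsum hq ⊢
  have hp_top : p.height ≠ ⊤ := fun h => by simp [h] at hsum
  have hd_top : d ≠ ⊤ := fun h => by simp [h] at hsum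
  lift p.height to ℕ using hp_top with h
  lift d to ℕ using hd_top
  norm_cast at hsum hq hp ⊢
  omega

-- `YZ + Y³ + Z³ = 0` is a folium of Descartes, with a node at the origin.
namespace Folium

noncomputable abbrev curveIdeal : Ideal (MvPolynomial (Fin 3) ℚ) :=
  Ideal.span {X 0, X 1 * X 2 + X 1 ^ 3 + X 2 ^ 3}

theorem irreducible_equation :
    Irreducible (X 0 * X 1 + X 0 ^ 3 + X 1 ^ 3 : MvPolynomial (Fin 2) ℚ) := by
  set y : MvPolynomial (Fin 1) ℚ := X 0
  have himage : finSuccEquiv ℚ 1 (X 0 * X 1 + X 0 ^ 3 + X 1 ^ 3) =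
      Polynomial.X ^ 3 + Polynomial.C y * Polynomial.X + Polynomial.C (y ^ 3) := by
    rw [show (1 : Fin 2) = Fin.succ 0 from rfl]
    simp only [map_add, map_mul, map_pow, finSuccEquiv_X_zero, finSuccEquiv_X_succ]
    ring
  refine (MulEquiv.irreducible_iff (finSuccEquiv ℚ 1)).mp (himage ▸ ?_)
  refine Polynomial.irreducible_X_pow_three_add_C_mul_X_add_C fun r hr => ?_
  apply Rat.pow_three_add_self_add_one_ne_zero (eval 1 r)
  simpa [y] using congrArg (eval 1) hr

theorem curveIdeal_isPrime : curveIdeal.IsPrime := by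
  have hrename : rename Fin.succ (X 0 * X 1 + X 0 ^ 3 + X 1 ^ 3 : MvPolynomial (Fin 2) ℚ) =
      X 1 * X 2 + X 1 ^ 3 + X 2 ^ 3 := by
    simp [rename_X]
  rw [curveIdeal, ← hrename]
  apply isPrime_span_X_zero_rename_succ
  rw [Ideal.span_singleton_prime irreducible_equation.ne_zero]
  exact irreducible_equation.prime

theorem curveIdeal_le_ker_eval {x : Fin 3 → ℚ} (h0 : x 0 = 0)
    (hx : x 1 * x 2 + x 1 ^ 3 + x 2 ^ 3 = 0) : curveIdeal ≤ RingHom.ker (eval x) := by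
  rw [curveIdeal, Ideal.span_le, Set.insert_subset_iff, Set.singleton_subset_iff]
  simp [h0, hx]

theorem span_X_zero_lt_curveIdeal : Ideal.span {X 0} < curveIdeal := by
  refine lt_of_le_of_ne (Ideal.span_mono (by simp)) fun h => ?_
  have hF : X 1 * X 2 + X 1 ^ 3 + X 2 ^ 3 ∈ Ideal.span {(X 0 : MvPolynomial (Fin 3) ℚ)} :=
    h ▸ Ideal.subset_span (by simp)
  have hle : Ideal.span {(X 0 : MvPolynomial (Fin 3) ℚ)} ≤ RingHom.ker (eval ![0, 1, 0]) :=
    Ideal.span_le.mpr (by simp)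
  simpa using hle hF

theorem curveIdeal_lt_ker_eval_zero : curveIdeal < RingHom.ker (eval 0) := by
  refine lt_of_le_of_ne (curveIdeal_le_ker_eval rfl (by simp)) fun h => ?_
  have hX1 : (X 1 : MvPolynomial (Fin 3) ℚ) ∈ curveIdeal := h ▸ by simp
  have := curveIdeal_le_ker_eval (x := ![0, -1/2, -1/2]) rfl (by simp; norm_num) hX1
  norm_num at this

theorem two_le_height_curveIdeal : 2 ≤ curveIdeal.height := by
  have : (Ideal.span {(X 0 : MvPolynomial (Fin 3) ℚ)}).IsPrime :=
    (Ideal.span_singleton_prime (X_ne_zero 0)).mpr X_prime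
  have := curveIdeal_isPrime
  calc (2 : ℕ∞) = (⊥ : Ideal (MvPolynomial (Fin 3) ℚ)).height + 1 + 1 := by
        simp [one_add_one_eq_two]
    _ ≤ (Ideal.span {(X 0 : MvPolynomial (Fin 3) ℚ)}).height + 1 := by
      gcongr
      exact Ideal.height_add_one_le_of_lt_of_isPrime (bot_lt_iff_ne_bot.mpr (by simp))
    _ ≤ curveIdeal.height := Ideal.height_add_one_le_of_lt_of_isPrime span_X_zero_lt_curveIdeal

theorem one_le_ringKrullDim_quotient_curveIdeal :
    1 ≤ ringKrullDim (MvPolynomial (Fin 3) ℚ ⧸ curveIdeal) := by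
  let curve : PrimeSpectrum (MvPolynomial (Fin 3) ℚ) := ⟨curveIdeal, curveIdeal_isPrime⟩
  let origin : PrimeSpectrum (MvPolynomial (Fin 3) ℚ) := ⟨_, RingHom.ker_isPrime (eval 0)⟩
  rw [ringKrullDim_quotient_eq_coheight curve]
  exact_mod_cast le_of_add_le_right (Order.coheight_add_one_le (b := curve) (a := origin)
    curveIdeal_lt_ker_eval_zero)

end Folium

open Folium in
/-- The Krull dimension of `ℚ[X,Y,Z]/⟨X, YZ + Y³ + Z³⟩` equals `1`; equivalently the
prime ideal `⟨X, YZ + Y³ + Z³⟩` has height `2` in `ℚ[X,Y,Z]`. -/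
theorem stmt_9 :
    letI I : Ideal (MvPolynomial (Fin 3) ℚ) :=
      Ideal.span {X 0, X 1 * X 2 + X 1 ^ 3 + X 2 ^ 3}
    ringKrullDim (MvPolynomial (Fin 3) ℚ ⧸ I) = 1 ∧
      ∃ hI : I.IsPrime,
        Order.height (⟨I, hI⟩ : PrimeSpectrum (MvPolynomial (Fin 3) ℚ)) = 2 := by
  have := curveIdeal_isPrime
  have hdim : ringKrullDim (MvPolynomial (Fin 3) ℚ) = (2 : ℕ) + (1 : ℕ) := by
    rw [MvPolynomial.ringKrullDim_of_isNoetherianRing]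
    norm_num
  obtain ⟨hheight, hquot⟩ := Ideal.height_eq_and_ringKrullDim_quotient_eq hdim
    (by exact_mod_cast two_le_height_curveIdeal)
    (by exact_mod_cast one_le_ringKrullDim_quotient_curveIdeal)
  refine ⟨by exact_mod_cast hquot, curveIdeal_isPrime, ?_⟩
  rw [← PrimeSpectrum.height_eq_orderHeight]
  exact_mod_cast hheight
end
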